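/- For every integer n ≥ 2 the following three real numbers are equal: A_n = (1/(1+ω₀)^{2n−1})·∑_{k=0}^{n−1} E₂(n−1,k)·(−1)^k·ω₀^{k+1}; B_n = ω₀·∑_{k=0}^{n−1} (−1)^{n+k−1}·d(n+k−1,k)/(1+ω₀)^{n+k}; C_n = ∑_{k=0}^{n−1} S(n+k−1,k)·(−1)^{k+1}·ω₀^k/(1+ω₀)^{n+k}. (These are the three representations, in terms of second-order Eulerian numbers, associated Stirling numbers of the first kind, and 2-associated Stirling subset numbers respectively, of n! times the n-th Taylor coefficient at t = 0 of W(e^t).) -/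

import Mathlib

/-!
With `f = W ∘ exp` one has `f' = f / (1 + f)`, hence `f⁽ⁿ⁾ = Pₙ(f) / (1 + f)^(2n-1)` with
`Pₙ₊₁ = X (1 + X) Pₙ' - (2n - 1) X Pₙ`. Each of `A_n`, `B_n`, `C_n` is `Q(ω) / (1 + ω)^(2n-1)`
for a polynomial `Q` written in one of the bases `X^(k+1)`, `X (1+X)^(n-1-k)`, `X^k (1+X)^(n-1-k)`.
The operator `X (1 + X) d/dX - (2n - 1) X` sends each basis element to a combination of two
adjacent basis elements of the next level, and the defining recurrences of `E₂`, `d` and `S` are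
exactly the resulting recurrences for the coefficients. So the three polynomials obey the same
recurrence in `n`, and they agree at `n = 2`.
-/

/-- Second-order Eulerian numbers: `E₂(0,0)=1`, `E₂(n,k)=0` if `n≥1` and `k≥n`, and
`E₂(n,k)=(k+1)·E₂(n−1,k)+(2n−1−k)·E₂(n−1,k−1)` for `n≥1`. -/
def E2 : ℕ → ℕ → ℕ
  | 0, 0 => 1
  | 0, _ + 1 => 0
  | n + 1, 0 => E2 n 0
  | n + 1, k + 1 => (k + 2) * E2 n (k + 1) + (2 * n - k) * E2 n k

/-- 2-associated Stirling subset numbers: `S(0,0)=1`, `S(n,k)=0` if `n<2k` and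
`(n,k)≠(0,0)`, and `S(n,k)=k·S(n−1,k)+(n−1)·S(n−2,k−1)` for `n≥1`. -/
def S2 : ℕ → ℕ → ℕ
  | 0, 0 => 1
  | 0, _ + 1 => 0
  | 1, _ => 0
  | _ + 2, 0 => 0
  | n + 2, k + 1 => (k + 1) * S2 (n + 1) (k + 1) + (n + 1) * S2 n k

/-- Associated Stirling numbers of the first kind: `d(0,0)=1`, `d(n,k)=0` if `n<2k` and
`(n,k)≠(0,0)`, and `d(n,k)=(n−1)·d(n−1,k)+(n−1)·d(n−2,k−1)` for `n≥1`. -/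
def dAssoc : ℕ → ℕ → ℕ
  | 0, 0 => 1
  | 0, _ + 1 => 0
  | 1, _ => 0
  | _ + 2, 0 => 0
  | n + 2, k + 1 => (n + 1) * dAssoc (n + 1) (k + 1) + (n + 1) * dAssoc n k

open Polynomial Finset

lemma E2_eq_zero_of_lt : ∀ {n k : ℕ}, n < k → E2 n k = 0
  | 0, _ + 1, _ => rfl
  | n + 1, k + 1, h => by
    rw [E2, E2_eq_zero_of_lt (by omega : n < k + 1), E2_eq_zero_of_lt (by omega : n < k)]; simp

lemma dAssoc_eq_zero_of_lt : ∀ {n k : ℕ}, n < 2 * k → dAssoc n k = 0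
  | 0, _ + 1, _ => rfl
  | 1, _ + 1, _ => rfl
  | n + 2, k + 1, h => by
    rw [dAssoc, dAssoc_eq_zero_of_lt (by omega : n + 1 < 2 * (k + 1)),
      dAssoc_eq_zero_of_lt (by omega : n < 2 * k)]; simp

lemma S2_eq_zero_of_lt : ∀ {n k : ℕ}, n < 2 * k → S2 n k = 0
  | 0, _ + 1, _ => rfl
  | 1, _ + 1, _ => rfl
  | n + 2, k + 1, h => by
    rw [S2, S2_eq_zero_of_lt (by omega : n + 1 < 2 * (k + 1)),
      S2_eq_zero_of_lt (by omega : n < 2 * k)]; simp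

lemma dAssoc_succ_zero (n : ℕ) : dAssoc (n + 1) 0 = 0 := by cases n <;> rfl

lemma S2_succ_zero (n : ℕ) : S2 (n + 1) 0 = 0 := by cases n <;> rfl

lemma Finset.sum_range_smul_add_smul_shift {S M : Type*} [CommSemiring S] [AddCommMonoid M]
    [Module S M] (a b α β : ℕ → S) (T : ℕ → M) (m : ℕ) (h₀ : b 0 = α 0 * a 0)
    (h_succ : ∀ k < m, b (k + 1) = α (k + 1) * a (k + 1) + β k * a k) (h_top : a m = 0) :
    ∑ k ∈ range m, a k • (α k • T k + β k • T (k + 1)) = ∑ k ∈ range (m + 1), b k • T k := by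
  have hb : ∑ k ∈ range m, b (k + 1) • T (k + 1) =
      ∑ k ∈ range m, ((α (k + 1) * a (k + 1)) • T (k + 1) + (β k * a k) • T (k + 1)) :=
    sum_congr rfl fun k hk => by rw [h_succ k (mem_range.1 hk), add_smul]
  rw [sum_range_succ', hb, sum_add_distrib, h₀, add_right_comm,
    ← sum_range_succ' (fun k => (α k * a k) • T k), sum_range_succ, h_top, mul_zero, zero_smul,
    add_zero, ← sum_add_distrib]
  refine sum_congr rfl fun k _ => ?_
  rw [smul_add, smul_smul, smul_smul, mul_comm (a k), mul_comm (a k)]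

noncomputable section

variable {R : Type*} [CommRing R]

lemma Polynomial.mul_derivative_pow (p : R[X]) (j : ℕ) :
    p * derivative (p ^ j) = j * p ^ j * derivative p := by
  rcases j with _ | j
  · simp
  · rw [derivative_pow_succ, ← C_eq_natCast, pow_succ]
    simp only [map_add, map_natCast, C_1]
    push_cast
    ring

/-- If `f' = f / (1 + f)` and `f⁽ⁿ⁾ = P(f) / (1 + f)^(2n-1)`, then
`f⁽ⁿ⁺¹⁾ = (lambertStep n P)(f) / (1 + f)^(2n+1)`. -/
def lambertStep (n : ℕ) : R[X] →ₗ[R] R[X] :=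
  LinearMap.mulLeft R (X * (1 + X)) ∘ₗ derivative - LinearMap.mulLeft R ((2 * (n : R[X]) - 1) * X)

lemma lambertStep_apply (n : ℕ) (p : R[X]) :
    lambertStep n p = X * (1 + X) * derivative p - (2 * (n : R[X]) - 1) * X * p := rfl

-- The numerators of `A_n`, `B_n`, `C_n` over the common denominator `(1 + ω)^(2n-1)`.
variable (R) in
def E2Poly (n : ℕ) : R[X] :=
  ∑ k ∈ range n, ((-1) ^ k * E2 (n - 1) k : ℤ) • X ^ (k + 1)

variable (R) in
def dAssocPoly (n : ℕ) : R[X] :=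
  ∑ k ∈ range n, ((-1) ^ (n + k - 1) * dAssoc (n + k - 1) k : ℤ) • (X * (1 + X) ^ (n - 1 - k))

variable (R) in
def S2Poly (n : ℕ) : R[X] :=
  ∑ k ∈ range n, ((-1) ^ (k + 1) * S2 (n + k - 1) k : ℤ) • (X ^ k * (1 + X) ^ (n - 1 - k))

lemma lambertStep_X_pow_mul_one_add_X_pow (n i j : ℕ) :
    lambertStep n (X ^ i * (1 + X) ^ j : R[X]) =
      (i : ℤ) • (X ^ i * (1 + X) ^ (j + 1)) +
        (j + 1 - 2 * n : ℤ) • (X ^ (i + 1) * (1 + X) ^ j) := by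
  have hX := mul_derivative_pow (X : R[X]) i
  have hY := mul_derivative_pow (1 + X : R[X]) j
  simp only [derivative_X, derivative_add, derivative_one, zero_add, mul_one] at hX hY
  simp only [lambertStep_apply, derivative_mul, zsmul_eq_mul]
  push_cast
  linear_combination (1 + X) * (1 + X) ^ j * hX + X * X ^ i * hY

lemma lambertStep_X_mul_one_add_X_pow (n j : ℕ) :
    lambertStep n (X * (1 + X) ^ j : R[X]) =
      (j + 2 - 2 * n : ℤ) • (X * (1 + X) ^ (j + 1)) + (2 * n - 1 - j : ℤ) • (X * (1 + X) ^ j) := by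
  have h := lambertStep_X_pow_mul_one_add_X_pow (R := R) n 1 j
  simp only [pow_one, zsmul_eq_mul] at h ⊢
  rw [h]
  push_cast
  ring

lemma lambertStep_X_pow_succ (n k : ℕ) :
    lambertStep n (X ^ (k + 1) : R[X]) =
      (k + 1 : ℤ) • X ^ (k + 1) + (k + 2 - 2 * n : ℤ) • X ^ (k + 2) := by
  have h := lambertStep_X_pow_mul_one_add_X_pow (R := R) n (k + 1) 0
  simp only [pow_zero, mul_one, zero_add, pow_one, zsmul_eq_mul] at h ⊢
  rw [h]
  push_cast
  ring

lemma lambertStep_E2Poly (n : ℕ) : lambertStep (n + 1) (E2Poly R (n + 1)) = E2Poly R (n + 2) := by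
  calc lambertStep (n + 1) (E2Poly R (n + 1))
      = ∑ k ∈ range (n + 1), ((-1) ^ k * E2 n k : ℤ) •
          ((k + 1 : ℤ) • X ^ (k + 1) + (k - 2 * n : ℤ) • X ^ (k + 1 + 1)) := by
        simp only [E2Poly, map_sum, map_zsmul, Nat.add_sub_cancel]
        refine sum_congr rfl fun k _ => ?_
        rw [lambertStep_X_pow_succ]
        simp only [zsmul_eq_mul]
        push_cast
        ring
    _ = E2Poly R (n + 2) := by
        refine sum_range_smul_add_smul_shift (S := ℤ)
          (fun k => (-1) ^ k * E2 n k) (fun k => (-1) ^ k * E2 (n + 1) k)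
          (fun k => k + 1) (fun k => k - 2 * n) (fun k => X ^ (k + 1)) (n + 1)
          (by simp [E2]) (fun k hk => ?_) (by simp [E2_eq_zero_of_lt])
        rw [E2]
        push_cast [Nat.cast_sub (by omega : k ≤ 2 * n)]
        ring

lemma dAssocPoly_succ (n : ℕ) : dAssocPoly R (n + 1) =
    ∑ k ∈ range (n + 1), ((-1) ^ (n + k) * dAssoc (n + k) k : ℤ) • (X * (1 + X) ^ (n - k)) :=
  sum_congr rfl fun k _ => by rw [Nat.add_right_comm, Nat.add_sub_cancel, Nat.add_sub_cancel]

lemma S2Poly_succ (n : ℕ) : S2Poly R (n + 1) =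
    ∑ k ∈ range (n + 1), ((-1) ^ (k + 1) * S2 (n + k) k : ℤ) • (X ^ k * (1 + X) ^ (n - k)) :=
  sum_congr rfl fun k _ => by rw [Nat.add_right_comm, Nat.add_sub_cancel, Nat.add_sub_cancel]

lemma lambertStep_dAssocPoly (n : ℕ) :
    lambertStep (n + 1) (dAssocPoly R (n + 1)) = dAssocPoly R (n + 2) := by
  calc lambertStep (n + 1) (dAssocPoly R (n + 1))
      = ∑ k ∈ range (n + 1), ((-1) ^ (n + k) * dAssoc (n + k) k : ℤ) •
          ((-(n + k) : ℤ) • (X * (1 + X) ^ (n + 1 - k))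
            + (n + k + 1 : ℤ) • (X * (1 + X) ^ (n + 1 - (k + 1)))) := by
        simp only [dAssocPoly_succ, map_sum, map_zsmul]
        refine sum_congr rfl fun k hk => ?_
        have hk : k ≤ n := Nat.lt_succ_iff.1 (mem_range.1 hk)
        rw [lambertStep_X_mul_one_add_X_pow, show n - k + 1 = n + 1 - k by omega,
          show n + 1 - (k + 1) = n - k by omega]
        simp only [zsmul_eq_mul]
        push_cast [Nat.cast_sub hk]
        ring
    _ = dAssocPoly R (n + 2) := by
        rw [dAssocPoly_succ]
        refine sum_range_smul_add_smul_shift (S := ℤ)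
          (fun k => (-1) ^ (n + k) * dAssoc (n + k) k)
          (fun k => (-1) ^ (n + 1 + k) * dAssoc (n + 1 + k) k)
          (fun k => -(n + k)) (fun k => n + k + 1) (fun k => (X * (1 + X) ^ (n + 1 - k) : R[X]))
          (n + 1) ?_ (fun k hk => ?_)
          (by simp [dAssoc_eq_zero_of_lt (by omega : n + (n + 1) < 2 * (n + 1))])
        · cases n <;> simp [dAssoc_succ_zero]
        · rw [show n + 1 + (k + 1) = n + k + 2 by omega, ← add_assoc, dAssoc]
          push_cast
          ring

lemma lambertStep_S2Poly (n : ℕ) : lambertStep (n + 1) (S2Poly R (n + 1)) = S2Poly R (n + 2) := by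
  calc lambertStep (n + 1) (S2Poly R (n + 1))
      = ∑ k ∈ range (n + 1), ((-1) ^ (k + 1) * S2 (n + k) k : ℤ) •
          ((k : ℤ) • (X ^ k * (1 + X) ^ (n + 1 - k))
            + (-(n + k + 1) : ℤ) • (X ^ (k + 1) * (1 + X) ^ (n + 1 - (k + 1)))) := by
        simp only [S2Poly_succ, map_sum, map_zsmul]
        refine sum_congr rfl fun k hk => ?_
        have hk : k ≤ n := Nat.lt_succ_iff.1 (mem_range.1 hk)
        rw [lambertStep_X_pow_mul_one_add_X_pow, show n - k + 1 = n + 1 - k by omega,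
          show n + 1 - (k + 1) = n - k by omega]
        simp only [zsmul_eq_mul]
        push_cast [Nat.cast_sub hk]
        ring
    _ = S2Poly R (n + 2) := by
        rw [S2Poly_succ]
        refine sum_range_smul_add_smul_shift (S := ℤ)
          (fun k => (-1) ^ (k + 1) * S2 (n + k) k) (fun k => (-1) ^ (k + 1) * S2 (n + 1 + k) k)
          (fun k => k) (fun k => -(n + k + 1)) (fun k => (X ^ k * (1 + X) ^ (n + 1 - k) : R[X]))
          (n + 1) ?_ (fun k hk => ?_)
          (by simp [S2_eq_zero_of_lt (by omega : n + (n + 1) < 2 * (n + 1))])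
        · simp [S2_succ_zero]
        · rw [show n + 1 + (k + 1) = n + k + 2 by omega, ← add_assoc, S2]
          push_cast
          ring

lemma dAssocPoly_eq_E2Poly : ∀ n : ℕ, dAssocPoly R n = E2Poly R n
  | 0 => rfl
  | 1 => by simp [dAssocPoly, E2Poly, dAssoc, E2]
  | n + 2 => by rw [← lambertStep_dAssocPoly, ← lambertStep_E2Poly, dAssocPoly_eq_E2Poly (n + 1)]

lemma S2Poly_eq_E2Poly {n : ℕ} (hn : 2 ≤ n) : S2Poly R n = E2Poly R n := by
  induction n, hn using Nat.le_induction with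
  | base => simp [S2Poly, E2Poly, sum_range_succ, S2, E2]
  | succ n hn ih =>
    obtain ⟨m, rfl⟩ : ∃ m, n = m + 1 := ⟨n - 1, by omega⟩
    rw [← lambertStep_S2Poly, ← lambertStep_E2Poly, ih]

lemma eval_E2Poly (x : R) (n : ℕ) :
    (E2Poly R n).eval x = ∑ k ∈ range n, (E2 (n - 1) k : R) * (-1) ^ k * x ^ (k + 1) := by
  simp only [E2Poly, eval_finsetSum]
  refine sum_congr rfl fun k _ => ?_
  simp only [zsmul_eq_mul, eval_mul, eval_pow, eval_X, eval_intCast]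
  push_cast
  ring

end

section Evaluation

variable {K : Type*} [Field K] {x : K}

lemma eval_dAssocPoly_div (hx : 1 + x ≠ 0) (n : ℕ) :
    (dAssocPoly K n).eval x / (1 + x) ^ (2 * n - 1) =
      x * ∑ k ∈ range n, (-1) ^ (n + k - 1) * (dAssoc (n + k - 1) k : K) / (1 + x) ^ (n + k) := by
  rw [dAssocPoly, eval_finsetSum, sum_div, mul_sum]
  refine sum_congr rfl fun k hk => ?_
  have hk : k < n := mem_range.1 hk
  rw [show 2 * n - 1 = (n + k) + (n - 1 - k) by omega, pow_add]
  simp only [zsmul_eq_mul, eval_mul, eval_pow, eval_add, eval_one, eval_X, eval_intCast]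
  push_cast
  field_simp

lemma eval_S2Poly_div (hx : 1 + x ≠ 0) (n : ℕ) :
    (S2Poly K n).eval x / (1 + x) ^ (2 * n - 1) =
      ∑ k ∈ range n, (S2 (n + k - 1) k : K) * (-1) ^ (k + 1) * x ^ k / (1 + x) ^ (n + k) := by
  rw [S2Poly, eval_finsetSum, sum_div]
  refine sum_congr rfl fun k hk => ?_
  have hk : k < n := mem_range.1 hk
  rw [show 2 * n - 1 = (n + k) + (n - 1 - k) by omega, pow_add]
  simp only [zsmul_eq_mul, eval_mul, eval_pow, eval_add, eval_one, eval_X, eval_intCast]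
  push_cast
  field_simp
  ring

end Evaluation

/-- with `ω₀` the Omega constant (`ω₀·exp ω₀ = 1`), for `n ≥ 2` the three
numbers `A_n`, `B_n`, `C_n` (the three representations of `n!` times the `n`-th Taylor
coefficient of `W(e^t)` at `t = 0`) are equal. -/
theorem stmt_18 (ω : ℝ) (hω : ω * Real.exp ω = 1) (n : ℕ) (hn : 2 ≤ n) :
    (1 / (1 + ω) ^ (2 * n - 1)) *
        ∑ k ∈ Finset.range n, (E2 (n - 1) k : ℝ) * (-1) ^ k * ω ^ (k + 1)
      = ω * ∑ k ∈ Finset.range n,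
          (-1 : ℝ) ^ (n + k - 1) * (dAssoc (n + k - 1) k : ℝ) / (1 + ω) ^ (n + k) ∧
    (1 / (1 + ω) ^ (2 * n - 1)) *
        ∑ k ∈ Finset.range n, (E2 (n - 1) k : ℝ) * (-1) ^ k * ω ^ (k + 1)
      = ∑ k ∈ Finset.range n,
          (S2 (n + k - 1) k : ℝ) * (-1) ^ (k + 1) * ω ^ k / (1 + ω) ^ (n + k) := by
  have hω_pos : 0 < ω := pos_of_mul_pos_left (hω ▸ one_pos) (Real.exp_pos ω).le
  have hω₁ : 1 + ω ≠ 0 := by positivity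
  rw [one_div_mul_eq_div, ← eval_E2Poly, ← eval_dAssocPoly_div hω₁, ← eval_S2Poly_div hω₁,
    dAssocPoly_eq_E2Poly, S2Poly_eq_E2Poly hn]
  exact ⟨rfl, rfl⟩
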